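/- Let F be an asymmetric norm on ℝ² that is C¹ on ℝ² ∖ {0}. Then for all θ ∈ ℝ, cos φ_F(θ) ≥ 1/κ(F); equivalently, ‖∇F(e_θ)‖ ≤ κ(F)·F(e_θ). -/

import Mathlib

open scoped RealInnerProductSpace
open MeasureTheory Real

noncomputable section

abbrev E2 : Type := EuclideanSpace ℝ (Fin 2)

def mk2 (a b : ℝ) : E2 := !₂[a, b]

def IsAsymNorm (F : E2 → ℝ) : Prop :=
  ConvexOn ℝ Set.univ F ∧
  (∀ (c : ℝ), 0 ≤ c → ∀ u : E2, F (c • u) = c * F u) ∧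
  (∀ u : E2, 0 ≤ F u) ∧
  (∀ u : E2, u ≠ 0 → 0 < F u)

def IsAcute (F : E2 → ℝ) (u v : E2) : Prop :=
  ∀ δ : ℝ, 0 ≤ δ → F u ≤ F (u + δ • v) ∧ F v ≤ F (v + δ • u)

noncomputable def kappa (F : E2 → ℝ) : ℝ :=
  sSup {r : ℝ | ∃ u v : E2, ‖u‖ = 1 ∧ ‖v‖ = 1 ∧ r = F u / F v}

def det2 (u v : E2) : ℝ := u 0 * v 1 - u 1 * v 0

def IsIntVec (u : E2) : Prop := (∃ n : ℤ, u 0 = (n : ℝ)) ∧ (∃ n : ℤ, u 1 = (n : ℝ))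

def eTheta (θ : ℝ) : E2 := mk2 (Real.cos θ) (Real.sin θ)

noncomputable def phiF (F : E2 → ℝ) (θ : ℝ) : ℝ :=
  Real.arctan (det2 (eTheta θ) (gradient F (eTheta θ)) / F (eTheta θ))

def rot2 (θ : ℝ) (w : E2) : E2 :=
  mk2 (Real.cos θ * w 0 - Real.sin θ * w 1) (Real.sin θ * w 0 + Real.cos θ * w 1)

def perp (z : E2) : E2 := mk2 (-(z 1)) (z 0)

/-! A convex, positively homogeneous `F` satisfies Euler's relation `⟪∇F(e), e⟫ = F(e)`, and convexity
makes `∇F(e)` a subgradient, so `⟪∇F(e), v⟫ ≤ F(v)` for every `v`. Testing this on the unit vector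
along `∇F(e)` gives `‖∇F(e)‖ ≤ F(∇F(e)/‖∇F(e)‖) ≤ κ(F) F(e)`. For a unit `e`, Lagrange's identity
`‖∇F(e)‖² = ⟪e, ∇F(e)⟫² + det(e, ∇F(e))²` shows `cos φ_F = F(e)/‖∇F(e)‖`, which is therefore
at least `1/κ(F)`. -/

open Filter Set Topology

section InnerProductSpace

variable {E : Type*} [NormedAddCommGroup E] [InnerProductSpace ℝ E] [CompleteSpace E]
  {F : E → ℝ} {g x : E}

theorem HasGradientAt.hasDerivAt_comp_add_smul (hg : HasGradientAt F g x) (v : E) :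
    HasDerivAt (fun t : ℝ => F (x + t • v)) ⟪g, v⟫ 0 := by
  have hline : HasDerivAt (fun t : ℝ => x + t • v) v 0 := by
    simpa using ((hasDerivAt_id (0 : ℝ)).smul_const v).const_add x
  have hF : HasFDerivAt F (InnerProductSpace.toDual ℝ E g) (x + (0 : ℝ) • v) := by
    simpa [hasGradientAt_iff_hasFDerivAt] using hg
  exact hF.comp_hasDerivAt 0 hline

theorem HasGradientAt.inner_self_eq_of_homogeneous
    (hhom : ∀ c : ℝ, 0 ≤ c → ∀ u : E, F (c • u) = c * F u) (hg : HasGradientAt F g x) :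
    ⟪g, x⟫ = F x := by
  have hray : (fun t : ℝ => F (x + t • x)) =ᶠ[𝓝 0] fun t => (1 + t) * F x := by
    filter_upwards [Ioi_mem_nhds (show (-1 : ℝ) < 0 by norm_num)] with t ht
    rw [← hhom _ (by linarith [mem_Ioi.mp ht]), add_smul, one_smul]
  have hlin : HasDerivAt (fun t : ℝ => (1 + t) * F x) (F x) 0 := by
    simpa using ((hasDerivAt_id (0 : ℝ)).const_add 1).mul_const (F x)
  exact (hg.hasDerivAt_comp_add_smul x).unique (hlin.congr_of_eventuallyEq hray)

theorem ConvexOn.add_inner_sub_le_of_hasGradientAt (hconv : ConvexOn ℝ univ F)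
    (hg : HasGradientAt F g x) (v : E) : F x + ⟪g, v - x⟫ ≤ F v := by
  have hline : ConvexOn ℝ univ (fun t : ℝ => F (x + t • (v - x))) := by
    simpa [Function.comp_def, AffineMap.lineMap_apply_module', add_comm] using
      hconv.comp_affineMap (AffineMap.lineMap x v)
  have := hline.le_slope_of_hasDerivAt (mem_univ 0) (mem_univ 1) one_pos
    (hg.hasDerivAt_comp_add_smul (v - x))
  simp only [slope_def_field, one_smul, add_sub_cancel, zero_smul, add_zero, sub_zero, div_one]
    at this
  linarith

theorem ConvexOn.inner_gradient_le_of_homogeneous (hconv : ConvexOn ℝ univ F)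
    (hhom : ∀ c : ℝ, 0 ≤ c → ∀ u : E, F (c • u) = c * F u) (hg : HasGradientAt F g x) (v : E) :
    ⟪g, v⟫ ≤ F v := by
  have := hconv.add_inner_sub_le_of_hasGradientAt hg v
  rwa [inner_sub_right, hg.inner_self_eq_of_homogeneous hhom, add_sub_cancel] at this

end InnerProductSpace

theorem inner_sq_add_det2_sq (u v : E2) : ⟪u, v⟫ ^ 2 + det2 u v ^ 2 = ‖u‖ ^ 2 * ‖v‖ ^ 2 := by
  simp only [EuclideanSpace.norm_sq_eq, PiLp.inner_apply, Fin.sum_univ_two, det2,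
    RCLike.inner_apply, conj_trivial, Real.norm_eq_abs, sq_abs]
  ring

theorem cos_arctan_det2_div_inner {u v : E2} (hu : ‖u‖ = 1) (huv : 0 < ⟪u, v⟫) :
    cos (arctan (det2 u v / ⟪u, v⟫)) = ⟪u, v⟫ / ‖v‖ := by
  have hsq : 1 + (det2 u v / ⟪u, v⟫) ^ 2 = (‖v‖ / ⟪u, v⟫) ^ 2 := by
    have h := inner_sq_add_det2_sq u v
    rw [hu, one_pow, one_mul] at h
    field_simp
    linarith
  rw [cos_arctan, hsq, sqrt_sq (by positivity), one_div, inv_div]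

theorem norm_eTheta (θ : ℝ) : ‖eTheta θ‖ = 1 := by
  simp [EuclideanSpace.norm_eq, Fin.sum_univ_two, eTheta, mk2]

namespace IsAsymNorm

variable {F : E2 → ℝ}

theorem pos_of_norm_eq_one (hF : IsAsymNorm F) {u : E2} (hu : ‖u‖ = 1) : 0 < F u :=
  hF.2.2.2 u (norm_ne_zero_iff.mp (by simp [hu]))

theorem bddAbove_ratios (hF : IsAsymNorm F) :
    BddAbove {r : ℝ | ∃ u v : E2, ‖u‖ = 1 ∧ ‖v‖ = 1 ∧ r = F u / F v} := by
  have hcont : ContinuousOn F (Metric.sphere 0 1) :=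
    (hF.1.continuousOn isOpen_univ).mono (subset_univ _)
  obtain ⟨M, hM⟩ := (isCompact_sphere (0 : E2) 1).bddAbove_image hcont
  obtain ⟨w, hw, hmin⟩ := (isCompact_sphere (0 : E2) 1).exists_isMinOn
    (NormedSpace.sphere_nonempty.mpr zero_le_one) hcont
  have hw0 : 0 < F w := hF.2.2.2 w (ne_zero_of_mem_unit_sphere ⟨w, hw⟩)
  refine ⟨M / F w, ?_⟩
  rintro r ⟨u, v, hu, hv, rfl⟩
  have hu' : u ∈ Metric.sphere (0 : E2) 1 := by simpa using hu
  have hv' : v ∈ Metric.sphere (0 : E2) 1 := by simpa using hv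
  exact div_le_div₀ ((hF.2.2.1 u).trans (hM ⟨u, hu', rfl⟩)) (hM ⟨u, hu', rfl⟩) hw0 (hmin hv')

theorem div_le_kappa (hF : IsAsymNorm F) {u v : E2} (hu : ‖u‖ = 1) (hv : ‖v‖ = 1) :
    F u / F v ≤ kappa F :=
  le_csSup hF.bddAbove_ratios ⟨u, v, hu, hv, rfl⟩

theorem one_le_kappa (hF : IsAsymNorm F) : 1 ≤ kappa F := by
  have he : ‖eTheta 0‖ = 1 := norm_eTheta 0
  simpa [(hF.pos_of_norm_eq_one he).ne'] using hF.div_le_kappa he he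

theorem norm_le_kappa_mul (hF : IsAsymNorm F) {g e : E2} (he : ‖e‖ = 1)
    (hg : ∀ v, ⟪g, v⟫ ≤ F v) : ‖g‖ ≤ kappa F * F e := by
  have hFe : 0 < F e := hF.pos_of_norm_eq_one he
  rcases eq_or_ne g 0 with rfl | hg0
  · simpa using mul_nonneg (zero_le_one.trans hF.one_le_kappa) hFe.le
  set u := ‖g‖⁻¹ • g
  calc ‖g‖ = ⟪g, u⟫ := by
        rw [real_inner_smul_right, real_inner_self_eq_norm_sq]
        field_simp [norm_ne_zero_iff.mpr hg0]
    _ ≤ F u := hg u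
    _ = F u / F e * F e := by field_simp
    _ ≤ kappa F * F e := by gcongr; exact hF.div_le_kappa (norm_smul_inv_norm hg0) he

end IsAsymNorm

/-- `cos φ_F(θ) ≥ 1/κ(F)` for all `θ`; equivalently
`‖∇F(e_θ)‖ ≤ κ(F)·F(e_θ)`. -/
theorem stmt13 (F : E2 → ℝ) (hF : IsAsymNorm F) (hC1 : ContDiffOn ℝ 1 F {(0 : E2)}ᶜ) :
    ∀ θ : ℝ, (kappa F)⁻¹ ≤ Real.cos (phiF F θ) ∧
      ‖gradient F (eTheta θ)‖ ≤ kappa F * F (eTheta θ) := by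
  intro θ
  set e := eTheta θ
  set g := gradient F e
  have he : ‖e‖ = 1 := norm_eTheta θ
  have hFe : 0 < F e := hF.pos_of_norm_eq_one he
  have hgrad : HasGradientAt F g e :=
    ((hC1.contDiffAt (isOpen_compl_singleton.mem_nhds (norm_ne_zero_iff.mp (by simp [he])))
      ).differentiableAt one_ne_zero).hasGradientAt
  have heuler : ⟪e, g⟫ = F e := by
    rw [real_inner_comm, hgrad.inner_self_eq_of_homogeneous hF.2.1]
  have hnorm : ‖g‖ ≤ kappa F * F e :=
    hF.norm_le_kappa_mul he (hF.1.inner_gradient_le_of_homogeneous hF.2.1 hgrad)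
  have hcos : cos (phiF F θ) = F e / ‖g‖ := by
    show cos (arctan (det2 e g / F e)) = F e / ‖g‖
    rw [← heuler]
    exact cos_arctan_det2_div_inner he (heuler ▸ hFe)
  have hgpos : 0 < ‖g‖ := norm_pos_iff.mpr fun h => by simp [h, ← heuler] at hFe
  refine ⟨?_, hnorm⟩
  rw [hcos, inv_le_comm₀ (zero_lt_one.trans_le hF.one_le_kappa) (div_pos hFe hgpos), inv_div,
    div_le_iff₀ hFe]
  exact hnorm
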